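/- (Second Rule of Quadrilaterals) Let n ≥ 4 and let A and B be the z-matrix and w-matrix of a singular sequence and C = A + B. If i, j, k, l ∈ {1,…,n} are pairwise distinct and c_{ij} c_{jk} c_{kl} c_{li} ≠ 0, then none of the four sums a_{ij} + a_{kl}, a_{jk} + a_{li}, b_{ij} + b_{kl}, b_{jk} + b_{li} is equal to 1. -/

import Mathlib

open Filter Finset

/-- `Zq δ z k l` is the quantity `Z_{lk} = δ_{kl}^3 · (z_k − z_l)`
(and, applied to `w`, the quantity `W_{lk}`). -/
noncomputable def Zq {n : ℕ} (δ : Fin n → Fin n → ℂ) (z : Fin n → ℂ) (k l : Fin n) : ℂ :=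
  δ k l ^ 3 * (z k - z l)

/-- A singular sequence of normalized central configurations for the masses `m`:
sequences `z^{(N)}, w^{(N)} ∈ ℂ^n`, symmetric `δ^{(N)}`, and positive reals `ε_N → 0`
such that every term satisfies the central configuration equations
`z_k = ∑_{l≠k} m_l Z_{lk}`, `w_k = ∑_{l≠k} m_l W_{lk}`, the normalization
`δ_{kl}^2 z_{kl} w_{kl} = 1` (`k ≠ l`), the maximum of the `|z_k|, |Z_{kl}|`
(resp. `|w_k|, |W_{kl}|`) equals `ε_N^{-2}`, and all the sequences
`ε_N^2 z_k, ε_N^2 w_k, ε_N^2 Z_{kl}, ε_N^2 W_{kl}` converge. -/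
structure SingularSeq (n : ℕ) (m : Fin n → ℂ) : Type where
  z : ℕ → Fin n → ℂ
  w : ℕ → Fin n → ℂ
  delta : ℕ → Fin n → Fin n → ℂ
  eps : ℕ → ℝ
  eps_pos : ∀ N, 0 < eps N
  eps_lim : Tendsto eps atTop (nhds 0)
  delta_symm : ∀ N, ∀ k l : Fin n, delta N k l = delta N l k
  eq_z : ∀ N, ∀ k : Fin n, z N k = ∑ l ∈ univ.erase k, m l * Zq (delta N) (z N) k l
  eq_w : ∀ N, ∀ k : Fin n, w N k = ∑ l ∈ univ.erase k, m l * Zq (delta N) (w N) k l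
  normalize : ∀ N, ∀ k l : Fin n, k ≠ l →
    delta N k l ^ 2 * (z N l - z N k) * (w N l - w N k) = 1
  maxZ : ∀ N, IsGreatest
      ({x : ℝ | ∃ k, x = ‖z N k‖} ∪
        {x : ℝ | ∃ k l, k ≠ l ∧ x = ‖Zq (delta N) (z N) k l‖})
      (eps N ^ (-2 : ℤ))
  maxW : ∀ N, IsGreatest
      ({x : ℝ | ∃ k, x = ‖w N k‖} ∪
        {x : ℝ | ∃ k l, k ≠ l ∧ x = ‖Zq (delta N) (w N) k l‖})
      (eps N ^ (-2 : ℤ))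
  conv_z : ∀ k : Fin n, ∃ L : ℂ,
    Tendsto (fun N => (eps N : ℂ) ^ 2 * z N k) atTop (nhds L)
  conv_w : ∀ k : Fin n, ∃ L : ℂ,
    Tendsto (fun N => (eps N : ℂ) ^ 2 * w N k) atTop (nhds L)
  conv_Z : ∀ k l : Fin n, k ≠ l → ∃ L : ℂ,
    Tendsto (fun N => (eps N : ℂ) ^ 2 * Zq (delta N) (z N) k l) atTop (nhds L)
  conv_W : ∀ k l : Fin n, k ≠ l → ∃ L : ℂ,
    Tendsto (fun N => (eps N : ℂ) ^ 2 * Zq (delta N) (w N) k l) atTop (nhds L)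

/-- `A` and `B` are the z-matrix and the w-matrix of the singular sequence `S`:
symmetric `{0,1}`-matrices whose entries record which of the (convergent) sequences
`ε_N^2 z_i`, `ε_N^2 Z_{ij}` (resp. `ε_N^2 w_i`, `ε_N^2 W_{ij}`) have nonzero limit. -/
structure IsZWMatrices {n : ℕ} {m : Fin n → ℂ} (S : SingularSeq n m)
    (A B : Matrix (Fin n) (Fin n) ℕ) : Prop where
  zeroOne_A : ∀ i j, A i j = 0 ∨ A i j = 1
  symm_A : ∀ i j, A i j = A j i
  zeroOne_B : ∀ i j, B i j = 0 ∨ B i j = 1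
  symm_B : ∀ i j, B i j = B j i
  diag_A : ∀ i, A i i = 1 ↔
    ¬ Tendsto (fun N => (S.eps N : ℂ) ^ 2 * S.z N i) atTop (nhds 0)
  off_A : ∀ i j, i ≠ j → (A i j = 1 ↔
    ¬ Tendsto (fun N => (S.eps N : ℂ) ^ 2 * Zq (S.delta N) (S.z N) i j) atTop (nhds 0))
  diag_B : ∀ i, B i i = 1 ↔
    ¬ Tendsto (fun N => (S.eps N : ℂ) ^ 2 * S.w N i) atTop (nhds 0)
  off_B : ∀ i j, i ≠ j → (B i j = 1 ↔
    ¬ Tendsto (fun N => (S.eps N : ℂ) ^ 2 * Zq (S.delta N) (S.w N) i j) atTop (nhds 0))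

/-!
For a pair `p ≠ q` write `z, w` for the differences `z_p − z_q, w_p − w_q` and `X, Y` for the
rescaled `ε²Z_{pq}, ε²W_{pq}`, which have norm at most `1`. The normalization `δ²zw = 1` gives
`z⁴Y³ = ε⁴X` and `(zw)²XY = ε⁴`. Hence `a_{pq} = 1` forces `w = O(ε)`, `a_{pq} = 0` together with
`b_{pq} = 1` forces `z = o(ε)`, and these two never hold at once. Both properties are equivalence
relations on the bodies, and chasing them around the quadrilateral always produces a pair for
which both hold. Exchanging `z` and `w` gives the statements about `B`.
-/

open Asymptotics Topology

theorem Equivalence.false_of_quadrilateral {β : Type*} {R T : β → β → Prop}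
    (hR : Equivalence R) (hT : Equivalence T) (hRT : ∀ ⦃p q⦄, R p q → T p q → p = q)
    {i j k l : β} (hij : i ≠ j) (hik : i ≠ k) (hjl : j ≠ l) (hkl : k ≠ l)
    (h_ij : T i j) (h_kl : R k l) (h_jk : R j k ∨ T j k) (h_li : R l i ∨ T l i) : False := by
  rcases h_jk with h_jk | h_jk <;> rcases h_li with h_li | h_li
  · exact hij <| hRT (hR.trans (hR.symm h_li) (hR.trans (hR.symm h_kl) (hR.symm h_jk))) h_ij
  · exact hjl <| hRT (hR.trans h_jk h_kl) (hT.trans (hT.symm h_ij) (hT.symm h_li))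
  · exact hik <| hRT (hR.trans (hR.symm h_li) (hR.symm h_kl)) (hT.trans h_ij h_jk)
  · exact hkl <| hRT h_kl (hT.trans (hT.symm h_jk) (hT.trans (hT.symm h_ij) (hT.symm h_li)))

namespace SingularSeq

section NormalizedPair

theorem pow_four_mul_eq_of_sq_mul_mul_eq_one {c d z w : ℂ} (h : d ^ 2 * z * w = 1) :
    z ^ 4 * (c ^ 2 * (d ^ 3 * w)) ^ 3 = c ^ 4 * (c ^ 2 * (d ^ 3 * z)) := by
  linear_combination c ^ 6 * d ^ 3 * z * (1 + d ^ 2 * z * w + (d ^ 2 * z * w) ^ 2) * h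

theorem sq_mul_mul_eq_of_sq_mul_mul_eq_one {c d z w : ℂ} (h : d ^ 2 * z * w = 1) :
    (z * w) ^ 2 * ((c ^ 2 * (d ^ 3 * z)) * (c ^ 2 * (d ^ 3 * w))) = (c * c) ^ 2 := by
  linear_combination c ^ 4 * (1 + d ^ 2 * z * w + (d ^ 2 * z * w) ^ 2) * h

variable {α : Type*} {l : Filter α} {g d z w : α → ℂ} {L : ℂ}

theorem isBigO_pow_four (hdzw : ∀ x, d x ^ 2 * z x * w x = 1)
    (hY : Tendsto (fun x => g x ^ 2 * (d x ^ 3 * w x)) l (𝓝 L)) (hL : L ≠ 0) :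
    (z ^ 4) =O[l] fun x => g x ^ 4 * (g x ^ 2 * (d x ^ 3 * z x)) := by
  have hY_inv := (hY.pow 3).inv₀ (pow_ne_zero 3 hL)
  have hbound : (fun x => g x ^ 4 * (g x ^ 2 * (d x ^ 3 * z x)) *
      ((g x ^ 2 * (d x ^ 3 * w x)) ^ 3)⁻¹) =O[l]
      fun x => g x ^ 4 * (g x ^ 2 * (d x ^ 3 * z x)) * 1 :=
    (isBigO_refl _ l).mul (hY_inv.isBigO_one ℂ)
  refine hbound.congr' ?_ (.of_forall fun x => mul_one _)
  filter_upwards [hY.eventually_ne hL] with x hx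
  rw [Pi.pow_apply, ← pow_four_mul_eq_of_sq_mul_mul_eq_one (hdzw x)]
  exact mul_inv_cancel_right₀ (pow_ne_zero 3 hx) _

theorem isLittleO_of_tendsto_zero (hdzw : ∀ x, d x ^ 2 * z x * w x = 1)
    (hX : Tendsto (fun x => g x ^ 2 * (d x ^ 3 * z x)) l (𝓝 0))
    (hY : Tendsto (fun x => g x ^ 2 * (d x ^ 3 * w x)) l (𝓝 L)) (hL : L ≠ 0) :
    z =o[l] g := by
  have hX' : (fun x => g x ^ 4 * (g x ^ 2 * (d x ^ 3 * z x))) =o[l] fun x => g x ^ 4 * 1 :=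
    (isBigO_refl (fun x => g x ^ 4) l).mul_isLittleO ((isLittleO_one_iff ℂ).2 hX)
  exact IsLittleO.of_pow (((isBigO_pow_four hdzw hY hL).trans_isLittleO hX').congr_right
    fun x => mul_one _) four_ne_zero

theorem isBigO_of_norm_le_one (hdzw : ∀ x, d x ^ 2 * z x * w x = 1)
    (hX : ∀ x, ‖g x ^ 2 * (d x ^ 3 * z x)‖ ≤ 1)
    (hY : Tendsto (fun x => g x ^ 2 * (d x ^ 3 * w x)) l (𝓝 L)) (hL : L ≠ 0) :
    z =O[l] g := by
  have hX' : (fun x => g x ^ 4 * (g x ^ 2 * (d x ^ 3 * z x))) =O[l] fun x => g x ^ 4 :=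
    isBigO_of_le l fun x => by
      rw [norm_mul]
      exact mul_le_of_le_one_right (norm_nonneg _) (hX x)
  exact IsBigO.of_pow four_ne_zero ((isBigO_pow_four hdzw hY hL).trans hX')

theorem not_isBigO_of_isLittleO (hdzw : ∀ x, d x ^ 2 * z x * w x = 1)
    (hg : ∃ᶠ x in l, g x ≠ 0) (hX : ∀ x, ‖g x ^ 2 * (d x ^ 3 * z x)‖ ≤ 1)
    (hY : ∀ x, ‖g x ^ 2 * (d x ^ 3 * w x)‖ ≤ 1) (hz : z =o[l] g) : ¬ w =O[l] g := by
  intro hw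
  have hgg : (fun x => g x * g x) =O[l] fun x => z x * w x := isBigO_of_le l fun x => by
    have hXY : ‖g x * g x‖ ^ 2 ≤ ‖z x * w x‖ ^ 2 := by
      rw [← norm_pow, ← sq_mul_mul_eq_of_sq_mul_mul_eq_one (hdzw x), norm_mul, norm_mul, norm_pow]
      exact mul_le_of_le_one_right (by positivity)
        (mul_le_one₀ (hX x) (norm_nonneg _) (hY x))
    exact (pow_le_pow_iff_left₀ (norm_nonneg _) (norm_nonneg _) two_ne_zero).1 hXY
  exact isLittleO_irrefl (hg.mono fun x hx => mul_ne_zero hx hx)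
    (hgg.trans_isLittleO (hz.mul_isBigO hw))

end NormalizedPair

variable {n : ℕ} {m : Fin n → ℂ} (S : SingularSeq n m) {p q : Fin n}

def swap : SingularSeq n m where
  z := S.w
  w := S.z
  delta := S.delta
  eps := S.eps
  eps_pos := S.eps_pos
  eps_lim := S.eps_lim
  delta_symm := S.delta_symm
  eq_z := S.eq_w
  eq_w := S.eq_z
  normalize N k l hkl := by linear_combination S.normalize N k l hkl
  maxZ := S.maxW
  maxW := S.maxZ
  conv_z := S.conv_w
  conv_w := S.conv_z
  conv_Z := S.conv_W
  conv_W := S.conv_Z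

def ZDiffIsLittleO (p q : Fin n) : Prop :=
  (fun N => S.z N p - S.z N q) =o[atTop] fun N => (S.eps N : ℂ)

def WDiffIsBigO (p q : Fin n) : Prop :=
  (fun N => S.w N p - S.w N q) =O[atTop] fun N => (S.eps N : ℂ)

theorem equivalence_zDiffIsLittleO : Equivalence S.ZDiffIsLittleO where
  refl p := by simpa only [ZDiffIsLittleO, sub_self] using isLittleO_zero _ _
  symm h := h.neg_left.congr_left fun N => neg_sub _ _
  trans h₁ h₂ := (h₁.add h₂).congr_left fun N => sub_add_sub_cancel _ _ _

theorem equivalence_wDiffIsBigO : Equivalence S.WDiffIsBigO where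
  refl p := by simpa only [WDiffIsBigO, sub_self] using isBigO_zero _ _
  symm h := h.neg_left.congr_left fun N => neg_sub _ _
  trans h₁ h₂ := (h₁.add h₂).congr_left fun N => sub_add_sub_cancel _ _ _

theorem sq_delta_mul_sub_mul_sub (hpq : p ≠ q) (N : ℕ) :
    S.delta N p q ^ 2 * (S.z N p - S.z N q) * (S.w N p - S.w N q) = 1 := by
  linear_combination S.normalize N p q hpq

theorem norm_eps_sq_mul_Zq_le_one (hpq : p ≠ q) (N : ℕ) :
    ‖(S.eps N : ℂ) ^ 2 * Zq (S.delta N) (S.z N) p q‖ ≤ 1 := by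
  have hZ : ‖Zq (S.delta N) (S.z N) p q‖ ≤ (S.eps N ^ 2)⁻¹ := by
    simpa using (S.maxZ N).2 (Or.inr ⟨p, q, hpq, rfl⟩)
  rw [norm_mul, norm_pow, Complex.norm_real, Real.norm_of_nonneg (S.eps_pos N).le]
  calc S.eps N ^ 2 * ‖Zq (S.delta N) (S.z N) p q‖ ≤ S.eps N ^ 2 * (S.eps N ^ 2)⁻¹ := by gcongr
    _ = 1 := mul_inv_cancel₀ (pow_pos (S.eps_pos N) 2).ne'

theorem wDiffIsBigO_of_not_tendsto (hpq : p ≠ q)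
    (hZ : ¬ Tendsto (fun N => (S.eps N : ℂ) ^ 2 * Zq (S.delta N) (S.z N) p q) atTop (𝓝 0)) :
    S.WDiffIsBigO p q := by
  obtain ⟨L, hL⟩ := S.conv_Z p q hpq
  exact isBigO_of_norm_le_one (S.swap.sq_delta_mul_sub_mul_sub hpq)
    (S.swap.norm_eps_sq_mul_Zq_le_one hpq) hL (by rintro rfl; exact hZ hL)

theorem zDiffIsLittleO_of_tendsto (hpq : p ≠ q)
    (hZ : Tendsto (fun N => (S.eps N : ℂ) ^ 2 * Zq (S.delta N) (S.z N) p q) atTop (𝓝 0))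
    (hW : ¬ Tendsto (fun N => (S.eps N : ℂ) ^ 2 * Zq (S.delta N) (S.w N) p q) atTop (𝓝 0)) :
    S.ZDiffIsLittleO p q := by
  obtain ⟨L, hL⟩ := S.conv_W p q hpq
  exact isLittleO_of_tendsto_zero (S.sq_delta_mul_sub_mul_sub hpq) hZ hL
    (by rintro rfl; exact hW hL)

theorem eq_of_zDiffIsLittleO_of_wDiffIsBigO (hz : S.ZDiffIsLittleO p q)
    (hw : S.WDiffIsBigO p q) : p = q := by
  by_contra hpq
  have hε : ∃ᶠ N in atTop, (S.eps N : ℂ) ≠ 0 :=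
    (Eventually.of_forall fun N => Complex.ofReal_ne_zero.2 (S.eps_pos N).ne').frequently
  exact not_isBigO_of_isLittleO (S.sq_delta_mul_sub_mul_sub hpq) hε
    (S.norm_eps_sq_mul_Zq_le_one hpq) (S.swap.norm_eps_sq_mul_Zq_le_one hpq) hz hw

end SingularSeq

namespace IsZWMatrices

variable {n : ℕ} {m : Fin n → ℂ} {S : SingularSeq n m} {A B : Matrix (Fin n) (Fin n) ℕ}
  {p q : Fin n}

theorem swap (h : IsZWMatrices S A B) : IsZWMatrices S.swap B A :=
  ⟨h.zeroOne_B, h.symm_B, h.zeroOne_A, h.symm_A, h.diag_B, h.off_B, h.diag_A, h.off_A⟩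

theorem wDiffIsBigO (h : IsZWMatrices S A B) (hpq : p ≠ q) (hA : A p q = 1) :
    S.WDiffIsBigO p q :=
  S.wDiffIsBigO_of_not_tendsto hpq ((h.off_A p q hpq).1 hA)

theorem zDiffIsLittleO (h : IsZWMatrices S A B) (hpq : p ≠ q) (hA : A p q = 0)
    (hC : A p q + B p q ≠ 0) : S.ZDiffIsLittleO p q := by
  have hB : B p q = 1 := by rcases h.zeroOne_B p q with hB | hB <;> omega
  exact S.zDiffIsLittleO_of_tendsto hpq
    (by by_contra hZ; have := (h.off_A p q hpq).2 hZ; omega) ((h.off_B p q hpq).1 hB)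

theorem zDiffIsLittleO_or_wDiffIsBigO (h : IsZWMatrices S A B) (hpq : p ≠ q)
    (hC : A p q + B p q ≠ 0) : S.ZDiffIsLittleO p q ∨ S.WDiffIsBigO p q := by
  rcases h.zeroOne_A p q with hA | hA
  · exact .inl (h.zDiffIsLittleO hpq hA hC)
  · exact .inr (h.wDiffIsBigO hpq hA)

theorem add_ne_one_of_quadrilateral (h : IsZWMatrices S A B) {i j k l : Fin n}
    (hij : i ≠ j) (hik : i ≠ k) (hjk : j ≠ k) (hjl : j ≠ l) (hkl : k ≠ l) (hli : l ≠ i)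
    (hC_ij : A i j + B i j ≠ 0) (hC_jk : A j k + B j k ≠ 0) (hC_kl : A k l + B k l ≠ 0)
    (hC_li : A l i + B l i ≠ 0) : A i j + A k l ≠ 1 := by
  have hR := S.equivalence_zDiffIsLittleO
  have hT := S.equivalence_wDiffIsBigO
  have hRT : ∀ ⦃p q⦄, S.ZDiffIsLittleO p q → S.WDiffIsBigO p q → p = q :=
    fun _ _ => S.eq_of_zDiffIsLittleO_of_wDiffIsBigO
  intro hsum
  rcases h.zeroOne_A i j with hA | hA
  · exact hR.false_of_quadrilateral hT hRT hkl hik.symm hjl.symm hij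
      (h.wDiffIsBigO hkl (by omega)) (h.zDiffIsLittleO hij hA hC_ij)
      (h.zDiffIsLittleO_or_wDiffIsBigO hli hC_li) (h.zDiffIsLittleO_or_wDiffIsBigO hjk hC_jk)
  · exact hR.false_of_quadrilateral hT hRT hij hik hjl hkl
      (h.wDiffIsBigO hij hA) (h.zDiffIsLittleO hkl (by omega) hC_kl)
      (h.zDiffIsLittleO_or_wDiffIsBigO hjk hC_jk) (h.zDiffIsLittleO_or_wDiffIsBigO hli hC_li)

end IsZWMatrices

theorem second_rule_of_quadrilaterals_general (n : ℕ) (m : Fin n → ℂ)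
    (S : SingularSeq n m) (A B : Matrix (Fin n) (Fin n) ℕ)
    (hAB : IsZWMatrices S A B) :
    ∀ i j k l : Fin n, i ≠ j → i ≠ k → i ≠ l → j ≠ k → j ≠ l → k ≠ l →
      (A i j + B i j) * (A j k + B j k) * (A k l + B k l) * (A l i + B l i) ≠ 0 →
      A i j + A k l ≠ 1 ∧ A j k + A l i ≠ 1 ∧
        B i j + B k l ≠ 1 ∧ B j k + B l i ≠ 1 := by
  intro i j k l hij hik hil hjk hjl hkl hC
  simp only [ne_eq, mul_eq_zero, not_or] at hC
  obtain ⟨⟨⟨hC_ij, hC_jk⟩, hC_kl⟩, hC_li⟩ := hC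
  exact ⟨hAB.add_ne_one_of_quadrilateral hij hik hjk hjl hkl hil.symm hC_ij hC_jk hC_kl hC_li,
    hAB.add_ne_one_of_quadrilateral hjk hjl hkl hik.symm hil.symm hij hC_jk hC_kl hC_li hC_ij,
    hAB.swap.add_ne_one_of_quadrilateral hij hik hjk hjl hkl hil.symm
      (by omega) (by omega) (by omega) (by omega),
    hAB.swap.add_ne_one_of_quadrilateral hjk hjl hkl hik.symm hil.symm hij
      (by omega) (by omega) (by omega) (by omega)⟩

theorem second_rule_of_quadrilaterals (n : ℕ) (hn : 4 ≤ n) (m : Fin n → ℂ)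
    (hm : ∀ I : Finset (Fin n), I.Nonempty → ∑ k ∈ I, m k ≠ 0)
    (S : SingularSeq n m) (A B : Matrix (Fin n) (Fin n) ℕ)
    (hAB : IsZWMatrices S A B) :
    ∀ i j k l : Fin n, i ≠ j → i ≠ k → i ≠ l → j ≠ k → j ≠ l → k ≠ l →
      (A i j + B i j) * (A j k + B j k) * (A k l + B k l) * (A l i + B l i) ≠ 0 →
      A i j + A k l ≠ 1 ∧ A j k + A l i ≠ 1 ∧
        B i j + B k l ≠ 1 ∧ B j k + B l i ≠ 1 :=
  second_rule_of_quadrilaterals_general n m S A B hAB
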